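/- (Leveled blockwise spectral norm bound.) Let I be a finite index set, M a real I × I matrix, C_sp ∈ ℕ, and let P be a finite collection of pairs (τ, σ) of subsets of I equipped with a level function level : P → ℕ, such that: (i) the rectangles τ × σ for (τ, σ) ∈ P are pairwise disjoint and their union is I × I; (ii) for every ℓ ∈ ℕ and every index i ∈ I, the number of pairs (τ, σ) ∈ P with level(τ,σ) = ℓ and i ∈ τ is at most C_sp, and the number of pairs (τ, σ) ∈ P with level(τ,σ) = ℓ and i ∈ σ is at most C_sp. Then ‖M‖₂ ≤ C_sp · Σ_{ℓ ∈ ℕ} max{ ‖M|_{τ×σ}‖₂ : (τ, σ) ∈ P, level(τ,σ) = ℓ }, where the sum has finitely many nonzero terms and the maximum over an empty set is 0. -/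

import Mathlib

/-! Test `M` against the bilinear form `yᵀ M x` and split this form along the partition into
block forms, grouped by level. A block contributes at most `‖M|_{τ×σ}‖₂ ‖y|_τ‖ ‖x|_σ‖`, so by
Cauchy–Schwarz one level contributes at most its largest block norm times
`√(∑ ‖y|_τ‖²) √(∑ ‖x|_σ‖²)`. Since on one level each index lies in at most `C_sp` row blocks
and at most `C_sp` column blocks, these two sums are at most `C_sp ‖y‖²` and `C_sp ‖x‖²`. -/

open Matrix

/-- The spectral norm of a real matrix: the operator norm of the induced linear map
between Euclidean spaces. -/
noncomputable def matSpectralNorm {m n : Type*} [Fintype m] [Fintype n] [DecidableEq n]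
    (M : Matrix m n ℝ) : ℝ :=
  ‖LinearMap.toContinuousLinearMap (Matrix.toEuclideanLin M)‖

open Finset

section SpectralNorm

variable {m n : Type*} [Fintype m] [Fintype n]

lemma EuclideanSpace.norm_eq_sqrt_sum_sq (x : EuclideanSpace ℝ n) : ‖x‖ = √(∑ j, x j ^ 2) := by
  simp [EuclideanSpace.norm_eq]

variable [DecidableEq n]

lemma inner_toEuclideanLin (A : Matrix m n ℝ) (x : EuclideanSpace ℝ n) (y : EuclideanSpace ℝ m) :
    inner ℝ (toEuclideanLin A x) y = ∑ i, ∑ j, y i * A i j * x j := by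
  simp [PiLp.inner_apply, mulVec, dotProduct, mul_sum, mul_assoc]

lemma sum_mul_le_matSpectralNorm (A : Matrix m n ℝ) (x : n → ℝ) (y : m → ℝ) :
    ∑ i, ∑ j, y i * A i j * x j ≤ matSpectralNorm A * √(∑ i, y i ^ 2) * √(∑ j, x j ^ 2) := by
  let T := LinearMap.toContinuousLinearMap (toEuclideanLin A)
  let X : EuclideanSpace ℝ n := WithLp.toLp 2 x
  let Y : EuclideanSpace ℝ m := WithLp.toLp 2 y
  calc ∑ i, ∑ j, y i * A i j * x j = inner ℝ (T X) Y := (inner_toEuclideanLin A X Y).symm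
    _ ≤ ‖T X‖ * ‖Y‖ := real_inner_le_norm _ _
    _ ≤ ‖T‖ * ‖X‖ * ‖Y‖ := by gcongr; exact T.le_opNorm X
    _ = matSpectralNorm A * √(∑ i, y i ^ 2) * √(∑ j, x j ^ 2) := by
      simp only [EuclideanSpace.norm_eq_sqrt_sum_sq, X, Y, matSpectralNorm, T]
      ring

lemma matSpectralNorm_le_of_sum_mul_le {A : Matrix m n ℝ} {c : ℝ} (hc : 0 ≤ c)
    (h : ∀ (x : n → ℝ) (y : m → ℝ),
      ∑ i, ∑ j, y i * A i j * x j ≤ c * √(∑ i, y i ^ 2) * √(∑ j, x j ^ 2)) :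
    matSpectralNorm A ≤ c := by
  refine ContinuousLinearMap.opNorm_le_of_re_inner_le hc fun x y hx hy => ?_
  rw [EuclideanSpace.norm_eq_sqrt_sum_sq] at hx hy
  simpa [inner_toEuclideanLin, hx, hy] using h x y

end SpectralNorm

lemma sum_product_mul_le_matSpectralNorm_submatrix {m n : Type*} [DecidableEq n]
    (M : Matrix m n ℝ) (τ : Finset m) (σ : Finset n) (x : n → ℝ) (y : m → ℝ) :
    ∑ ij ∈ τ ×ˢ σ, y ij.1 * M ij.1 ij.2 * x ij.2 ≤
      matSpectralNorm (M.submatrix ((↑) : τ → m) ((↑) : σ → n)) *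
        √(∑ i ∈ τ, y i ^ 2) * √(∑ j ∈ σ, x j ^ 2) := by
  rw [sum_product, ← sum_coe_sort τ, ← sum_coe_sort τ (fun i => y i ^ 2),
    ← sum_coe_sort σ (fun j => x j ^ 2)]
  simp_rw [← sum_coe_sort σ (fun j => y _ * M _ j * x j)]
  exact sum_mul_le_matSpectralNorm _ _ _

lemma sum_sum_le_mul_sum_of_card_filter_le {ι α : Type*} [Fintype α] [DecidableEq α]
    (Q : Finset ι) (s : ι → Finset α) {C : ℕ} (hC : ∀ a, #{p ∈ Q | a ∈ s p} ≤ C) {w : α → ℝ}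
    (hw : ∀ a, 0 ≤ w a) :
    ∑ p ∈ Q, ∑ a ∈ s p, w a ≤ C * ∑ a, w a := by
  calc ∑ p ∈ Q, ∑ a ∈ s p, w a = ∑ a, ∑ p ∈ Q with a ∈ s p, w a :=
        sum_comm' (by simp)
    _ = ∑ a, #{p ∈ Q | a ∈ s p} * w a := by simp only [sum_const, nsmul_eq_mul]
    _ ≤ ∑ a, C * w a :=
        sum_le_sum fun a _ => mul_le_mul_of_nonneg_right (mod_cast hC a) (hw a)
    _ = C * ∑ a, w a := (mul_sum _ _ _).symm

lemma sum_sum_product_mul_le_of_card_filter_le {m n : Type*} [Fintype m] [Fintype n]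
    [DecidableEq m] [DecidableEq n]
    (M : Matrix m n ℝ) (Q : Finset (Finset m × Finset n)) {C : ℕ} {s : ℝ} (hs : 0 ≤ s)
    (hnorm : ∀ p ∈ Q, matSpectralNorm (M.submatrix ((↑) : p.1 → m) ((↑) : p.2 → n)) ≤ s)
    (hrow : ∀ i, #{p ∈ Q | i ∈ p.1} ≤ C) (hcol : ∀ j, #{p ∈ Q | j ∈ p.2} ≤ C)
    (x : n → ℝ) (y : m → ℝ) :
    ∑ p ∈ Q, ∑ ij ∈ p.1 ×ˢ p.2, y ij.1 * M ij.1 ij.2 * x ij.2 ≤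
      C * s * √(∑ i, y i ^ 2) * √(∑ j, x j ^ 2) := by
  have hC : (0 : ℝ) ≤ C := C.cast_nonneg
  calc ∑ p ∈ Q, ∑ ij ∈ p.1 ×ˢ p.2, y ij.1 * M ij.1 ij.2 * x ij.2
      ≤ ∑ p ∈ Q, s * (√(∑ i ∈ p.1, y i ^ 2) * √(∑ j ∈ p.2, x j ^ 2)) := by
        refine sum_le_sum fun p hp => ?_
        rw [← mul_assoc]
        grw [sum_product_mul_le_matSpectralNorm_submatrix, hnorm p hp]
    _ = s * ∑ p ∈ Q, √(∑ i ∈ p.1, y i ^ 2) * √(∑ j ∈ p.2, x j ^ 2) := (mul_sum _ _ _).symm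
    _ ≤ s * (√(∑ p ∈ Q, ∑ i ∈ p.1, y i ^ 2) * √(∑ p ∈ Q, ∑ j ∈ p.2, x j ^ 2)) := by
        gcongr
        exact Real.sum_sqrt_mul_sqrt_le _ (fun _ => by positivity) (fun _ => by positivity)
    _ ≤ s * (√(C * ∑ i, y i ^ 2) * √(C * ∑ j, x j ^ 2)) := by
        gcongr
        · exact sum_sum_le_mul_sum_of_card_filter_le Q Prod.fst hrow fun _ => sq_nonneg _
        · exact sum_sum_le_mul_sum_of_card_filter_le Q Prod.snd hcol fun _ => sq_nonneg _
    _ = C * s * √(∑ i, y i ^ 2) * √(∑ j, x j ^ 2) := by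
        rw [Real.sqrt_mul hC, Real.sqrt_mul hC]
        linear_combination (s * √(∑ i, y i ^ 2) * √(∑ j, x j ^ 2)) * Real.mul_self_sqrt hC

lemma sum_sum_eq_sum_sum_product_of_pairwiseDisjoint {m n β : Type*} [Fintype m] [Fintype n]
    [AddCommMonoid β]
    (P : Finset (Finset m × Finset n))
    (hdisj : (P : Set (Finset m × Finset n)).PairwiseDisjoint (fun p => p.1 ×ˢ p.2))
    (hcover : ∀ i j, ∃ p ∈ P, i ∈ p.1 ∧ j ∈ p.2) (f : m → n → β) :
    ∑ i, ∑ j, f i j = ∑ p ∈ P, ∑ ij ∈ p.1 ×ˢ p.2, f ij.1 ij.2 := by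
  have huniv : P.disjiUnion (fun p => p.1 ×ˢ p.2) hdisj = univ :=
    eq_univ_of_forall fun ij => by simpa using hcover ij.1 ij.2
  rw [← sum_disjiUnion P _ hdisj, huniv, Fintype.sum_prod_type']

section LevelMax

variable {α β : Type*} (F : α → ℝ) (P : Finset α) (g : α → β)

lemma le_sSup_image_fiber {p : α} (hp : p ∈ P) :
    F p ≤ sSup (F '' {q ∈ (P : Set α) | g q = g p}) :=
  le_csSup (Set.toFinite _).bddAbove ⟨p, ⟨hp, rfl⟩, rfl⟩

lemma tsum_sSup_image_fiber [DecidableEq β] :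
    ∑' b, sSup (F '' {p ∈ (P : Set α) | g p = b}) =
      ∑ b ∈ P.image g, sSup (F '' {p ∈ (P : Set α) | g p = b}) := by
  refine tsum_eq_sum fun b hb => ?_
  have hempty : {p ∈ (P : Set α) | g p = b} = ∅ :=
    Set.eq_empty_of_forall_notMem fun p ⟨hp, hpb⟩ => hb (hpb ▸ mem_image_of_mem g hp)
  rw [hempty, Set.image_empty, Real.sSup_empty]

end LevelMax

/-- Leveled blockwise spectral norm bound: if the rectangles `τ × σ`, `(τ,σ) ∈ P`, form a
partition of `I × I` and on each level each index belongs to at most `C_sp` row blocks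
and at most `C_sp` column blocks, then
`‖M‖₂ ≤ C_sp · Σ_ℓ max{ ‖M|_{τ×σ}‖₂ : (τ,σ) ∈ P, level (τ,σ) = ℓ }`
(`sSup ∅ = 0` by convention; the sum has finitely many nonzero terms). -/
theorem leveled_blockwise_norm_bound {I : Type*} [Fintype I] [DecidableEq I]
    (M : Matrix I I ℝ) (Csp : ℕ) (P : Finset (Finset I × Finset I))
    (level : Finset I × Finset I → ℕ)
    (hdisj : (P : Set (Finset I × Finset I)).PairwiseDisjoint (fun p => p.1 ×ˢ p.2))
    (hcover : ∀ i j : I, ∃ p ∈ P, i ∈ p.1 ∧ j ∈ p.2)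
    (hrow : ∀ (ℓ : ℕ) (i : I), (P.filter (fun p => level p = ℓ ∧ i ∈ p.1)).card ≤ Csp)
    (hcol : ∀ (ℓ : ℕ) (i : I), (P.filter (fun p => level p = ℓ ∧ i ∈ p.2)).card ≤ Csp) :
    matSpectralNorm M ≤ Csp * ∑' ℓ : ℕ, sSup ((fun p : Finset I × Finset I =>
      matSpectralNorm (M.submatrix (fun a : ↥p.1 => (a : I)) (fun b : ↥p.2 => (b : I)))) ''
        {p ∈ (P : Set (Finset I × Finset I)) | level p = ℓ}) := by
  set F := fun p : Finset I × Finset I =>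
    matSpectralNorm (M.submatrix (fun a : ↥p.1 => (a : I)) (fun b : ↥p.2 => (b : I)))
  set S := fun ℓ => sSup (F '' {p ∈ (P : Set (Finset I × Finset I)) | level p = ℓ})
  have hS : ∀ ℓ, 0 ≤ S ℓ := fun ℓ =>
    Real.sSup_nonneg (Set.forall_mem_image.2 fun _ _ => norm_nonneg _)
  rw [tsum_sSup_image_fiber]
  refine matSpectralNorm_le_of_sum_mul_le
    (mul_nonneg Csp.cast_nonneg (sum_nonneg fun ℓ _ => hS ℓ)) fun x y => ?_
  rw [sum_sum_eq_sum_sum_product_of_pairwiseDisjoint P hdisj hcover,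
    ← sum_fiberwise_of_maps_to fun p hp => mem_image_of_mem level hp]
  calc _ ≤ ∑ ℓ ∈ P.image level, Csp * S ℓ * √(∑ i, y i ^ 2) * √(∑ j, x j ^ 2) := by
        refine sum_le_sum fun ℓ _ =>
          sum_sum_product_mul_le_of_card_filter_le M _ (hS ℓ) ?_ ?_ ?_ x y
        · intro p hp
          obtain ⟨hpP, rfl⟩ := mem_filter.1 hp
          exact le_sSup_image_fiber F P level hpP
        · simpa only [filter_filter] using hrow ℓ
        · simpa only [filter_filter] using hcol ℓ
    _ = _ := by rw [← sum_mul, ← sum_mul, ← mul_sum]
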